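/- arXiv:2403.14229 — 5 statements merged into one kernel-verified Lean document; each statement's English description precedes it below -/
import Mathlib

section
/- Let Z > 0 and let v : ℝ × ℝ → ℝ be such that v and its partial derivative ∂_z v in the first variable are continuous on [0,Z] × [0,1]. Then ∫₀¹ μ·(v(0,μ)² + v(Z,μ)²) dμ ≤ C_tr² · ( ∫₀^Z ∫₀¹ v(z,μ)² dμ dz + ∫₀^Z ∫₀¹ μ²·(∂_z v(z,μ))² dμ dz ), where C_tr = 2/√(1 − exp(−2Z)). -/
open MeasureTheory intervalIntegral Set

lemma trace_core (Z : ℝ) (hZ : 0 < Z) (μ : ℝ) (hμ0 : 0 < μ) (hμ1 : μ ≤ 1)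
    (f g : ℝ → ℝ) (hf : ContinuousOn f (Set.Icc 0 Z)) (hg : ContinuousOn g (Set.Icc 0 Z))
    (hd : ∀ z ∈ Set.Icc (0:ℝ) Z, HasDerivWithinAt f (g z) (Set.Icc 0 Z) z) :
    μ * (f 0 ^ 2 + f Z ^ 2) ≤
      (4 / (1 - Real.exp (-2 * Z))) *
        ((∫ z in (0:ℝ)..Z, f z ^ 2) + ∫ z in (0:ℝ)..Z, μ ^ 2 * g z ^ 2) := by
  have hμ := hμ0.ne'
  set a := Real.exp (-(Z/μ)) with ha_def
  have ha0 : 0 < a := Real.exp_pos _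
  have ha1 : a < 1 := Real.exp_lt_one_iff.2 (neg_lt_zero.2 (by positivity))
  have hderivAt : ∀ x ∈ Set.Ioo (0:ℝ) Z, HasDerivAt f (g x) x := by
    intro x hx
    exact (hd x (Ioo_subset_Icc_self hx)).hasDerivAt (Icc_mem_nhds hx.1 hx.2)
  have hE1 : ∀ x : ℝ, HasDerivAt (fun z => Real.exp (-(z/μ))) (-(1/μ) * Real.exp (-(x/μ))) x := by
    intro x
    have h1 : HasDerivAt (fun z : ℝ => -(z/μ)) (-(1/μ)) x := ((hasDerivAt_id x).div_const μ).neg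
    simpa [mul_comm] using h1.exp
  have hE2 : ∀ x : ℝ, HasDerivAt (fun z => Real.exp ((z - Z)/μ)) ((1/μ) * Real.exp ((x - Z)/μ)) x := by
    intro x
    have h1 : HasDerivAt (fun z : ℝ => (z - Z)/μ) (1/μ) x :=
      ((hasDerivAt_id x).sub_const Z).div_const μ
    simpa [mul_comm] using h1.exp
  have hcont1 : ContinuousOn (fun z => Real.exp (-(z/μ)) * f z ^ 2) (Icc 0 Z) :=
    (Real.continuous_exp.comp (continuous_id.div_const μ).neg).continuousOn.mul (hf.pow 2)
  have hcont2 : ContinuousOn (fun z => Real.exp ((z - Z)/μ) * f z ^ 2) (Icc 0 Z) :=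
    (Real.continuous_exp.comp ((continuous_id.sub continuous_const).div_const μ)).continuousOn.mul (hf.pow 2)
  set F1' : ℝ → ℝ := fun z => Real.exp (-(z/μ)) * (2 * f z * g z) - (1/μ) * Real.exp (-(z/μ)) * f z ^ 2 with hF1'
  set F2' : ℝ → ℝ := fun z => Real.exp ((z - Z)/μ) * (2 * f z * g z) + (1/μ) * Real.exp ((z - Z)/μ) * f z ^ 2 with hF2'
  have hcontF1' : ContinuousOn F1' (Icc 0 Z) := by
    apply ContinuousOn.sub
    · exact (Real.continuous_exp.comp (continuous_id.div_const μ).neg).continuousOn.mul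
        ((continuousOn_const.mul hf).mul hg)
    · exact (continuous_const.mul (Real.continuous_exp.comp (continuous_id.div_const μ).neg)).continuousOn.mul (hf.pow 2)
  have hcontF2' : ContinuousOn F2' (Icc 0 Z) := by
    apply ContinuousOn.add
    · exact (Real.continuous_exp.comp ((continuous_id.sub continuous_const).div_const μ)).continuousOn.mul
        ((continuousOn_const.mul hf).mul hg)
    · exact (continuous_const.mul (Real.continuous_exp.comp ((continuous_id.sub continuous_const).div_const μ))).continuousOn.mul (hf.pow 2)
  have hint1 : IntervalIntegrable F1' volume 0 Z := by
    apply ContinuousOn.intervalIntegrable; rwa [Set.uIcc_of_le hZ.le]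
  have hint2 : IntervalIntegrable F2' volume 0 Z := by
    apply ContinuousOn.intervalIntegrable; rwa [Set.uIcc_of_le hZ.le]
  have ftc1 : (∫ z in (0:ℝ)..Z, F1' z) = a * f Z ^ 2 - f 0 ^ 2 := by
    have h := integral_eq_sub_of_hasDeriv_right_of_le hZ.le hcont1
      (f' := F1') (fun x hx => by
        have h := ((hE1 x).mul ((hderivAt x hx).pow 2)).hasDerivWithinAt (s := Set.Ioi x)
        convert h using 1
        · rfl
        simp only [hF1', Pi.pow_apply, Nat.cast_ofNat]
        ring) hint1
    rw [h]
    simp [ha_def]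
  have ftc2 : (∫ z in (0:ℝ)..Z, F2' z) = f Z ^ 2 - a * f 0 ^ 2 := by
    have h := integral_eq_sub_of_hasDeriv_right_of_le hZ.le hcont2
      (f' := F2') (fun x hx => by
        have h := ((hE2 x).mul ((hderivAt x hx).pow 2)).hasDerivWithinAt (s := Set.Ioi x)
        convert h using 1
        · rfl
        simp only [hF2', Pi.pow_apply, Nat.cast_ofNat]
        ring) hint2
    rw [h, show (Z - Z)/μ = 0 by ring, show ((0:ℝ) - Z)/μ = -(Z/μ) by ring,
      Real.exp_zero, one_mul, ← ha_def]
  have hid : μ * (1 - a) * (f 0 ^ 2 + f Z ^ 2) = ∫ z in (0:ℝ)..Z, μ * (F2' z - F1' z) := by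
    rw [intervalIntegral.integral_const_mul, intervalIntegral.integral_sub hint2 hint1, ftc1, ftc2]
    ring
  have hpt : ∀ z ∈ Icc (0:ℝ) Z,
      μ * (F2' z - F1' z) ≤ 2 * f z ^ 2 + (1 - a) * (μ ^ 2 * g z ^ 2) := by
    intro z hz
    set p := Real.exp (-(z/μ)) with hp_def
    set q := Real.exp ((z - Z)/μ) with hq_def
    have hp0 : 0 < p := Real.exp_pos _
    have hq0 : 0 < q := Real.exp_pos _
    have hp1 : p ≤ 1 := Real.exp_le_one_iff.2 (neg_nonpos.2 (div_nonneg hz.1 hμ0.le))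
    have hq1 : q ≤ 1 := Real.exp_le_one_iff.2 (div_nonpos_iff.2 (Or.inr ⟨by linarith [hz.2], hμ0.le⟩))
    have hpq : p * q = a := by
      rw [hp_def, hq_def, ha_def, ← Real.exp_add]
      congr 1
      field_simp
      ring
    have key : μ * (F2' z - F1' z) = 2*μ*(q - p)*(f z)*(g z) + (p + q) * f z ^ 2 := by
      simp only [hF1', hF2', ← hp_def, ← hq_def]
      field_simp
      ring
    rw [key]
    nlinarith [hpq, hμ0, hμ1, mul_nonneg (mul_nonneg (sub_nonneg.2 hq1) (by linarith : (0:ℝ) ≤ 1 + p)) (sq_nonneg (f z + μ * g z)),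
      mul_nonneg (mul_nonneg (sub_nonneg.2 hp1) (by linarith : (0:ℝ) ≤ 1 + q)) (sq_nonneg (f z - μ * g z)),
      mul_nonneg (mul_nonneg (sub_nonneg.2 hp1) (sub_nonneg.2 hq1)) (sq_nonneg (f z)),
      sq_nonneg (f z), sq_nonneg (g z)]
  have hcontR : ContinuousOn (fun z => 2 * f z ^ 2 + (1 - a) * (μ ^ 2 * g z ^ 2)) (Icc 0 Z) :=
    (continuousOn_const.mul (hf.pow 2)).add (continuousOn_const.mul (continuousOn_const.mul (hg.pow 2)))
  have hintR : IntervalIntegrable (fun z => 2 * f z ^ 2 + (1 - a) * (μ ^ 2 * g z ^ 2)) volume 0 Z := by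
    apply ContinuousOn.intervalIntegrable; rwa [Set.uIcc_of_le hZ.le]
  have hintL : IntervalIntegrable (fun z => μ * (F2' z - F1' z)) volume 0 Z :=
    ((hint2.sub hint1).const_mul μ)
  have hintf2 : IntervalIntegrable (fun z => f z ^ 2) volume 0 Z := by
    apply ContinuousOn.intervalIntegrable; rw [Set.uIcc_of_le hZ.le]; exact hf.pow 2
  have hintg2 : IntervalIntegrable (fun z => μ ^ 2 * g z ^ 2) volume 0 Z := by
    apply ContinuousOn.intervalIntegrable; rw [Set.uIcc_of_le hZ.le]
    exact continuousOn_const.mul (hg.pow 2)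
  have hmono : μ * (1 - a) * (f 0 ^ 2 + f Z ^ 2) ≤
      2 * (∫ z in (0:ℝ)..Z, f z ^ 2) + (1 - a) * ∫ z in (0:ℝ)..Z, μ ^ 2 * g z ^ 2 := by
    rw [hid]
    have := intervalIntegral.integral_mono_on hZ.le hintL hintR hpt
    calc (∫ z in (0:ℝ)..Z, μ * (F2' z - F1' z))
        ≤ ∫ z in (0:ℝ)..Z, (2 * f z ^ 2 + (1 - a) * (μ ^ 2 * g z ^ 2)) := this
      _ = 2 * (∫ z in (0:ℝ)..Z, f z ^ 2) + (1 - a) * ∫ z in (0:ℝ)..Z, μ ^ 2 * g z ^ 2 := by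
          rw [intervalIntegral.integral_add (hintf2.const_mul 2) (hintg2.const_mul (1-a)),
            intervalIntegral.integral_const_mul, intervalIntegral.integral_const_mul]
  set I₁ := (∫ z in (0:ℝ)..Z, f z ^ 2) with hI₁
  set I₂ := (∫ z in (0:ℝ)..Z, μ ^ 2 * g z ^ 2) with hI₂
  have hI1 : 0 ≤ I₁ := intervalIntegral.integral_nonneg hZ.le (fun x _ => sq_nonneg _)
  have hI2 : 0 ≤ I₂ := intervalIntegral.integral_nonneg hZ.le (fun x _ => by positivity)
  set b := Real.exp (-Z) with hb_def
  have hb0 : 0 < b := Real.exp_pos _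
  have hb1 : b < 1 := Real.exp_lt_one_iff.2 (by linarith)
  have hab : a ≤ b := Real.exp_le_exp.2 (by
    rw [neg_le_neg_iff, le_div_iff₀ hμ0]; nlinarith)
  have hb2 : Real.exp (-2 * Z) = b ^ 2 := by
    rw [show (-2:ℝ) * Z = -Z + -Z by ring, Real.exp_add]; ring
  rw [hb2]
  have h1b2 : 0 < 1 - b ^ 2 := by nlinarith
  rw [div_mul_eq_mul_div, le_div_iff₀ h1b2]
  have hS : 0 ≤ f 0 ^ 2 + f Z ^ 2 := by positivity
  nlinarith [mul_nonneg (mul_nonneg hμ0.le hS) (sq_nonneg (1 - b)),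
    mul_nonneg (mul_nonneg hμ0.le hS) (sub_nonneg.2 hab), hmono]

lemma exists_cont_ext {s : Set (ℝ × ℝ)} (hs : IsClosed s) {f : ℝ × ℝ → ℝ}
    (hf : ContinuousOn f s) : ∃ F : ℝ × ℝ → ℝ, Continuous F ∧ ∀ x ∈ s, F x = f x := by
  obtain ⟨g, hg⟩ := ContinuousMap.exists_restrict_eq (Y := ℝ) hs ⟨s.restrict f, hf.restrict⟩
  exact ⟨g, g.continuous, fun x hx => ContinuousMap.congr_fun hg ⟨x, hx⟩⟩

lemma swap_int (Z : ℝ) (hZ : 0 ≤ Z) (F : ℝ × ℝ → ℝ) (hF : Continuous F) :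
    (∫ μ in (0:ℝ)..1, ∫ z in (0:ℝ)..Z, F (z, μ)) =
      ∫ z in (0:ℝ)..Z, ∫ μ in (0:ℝ)..1, F (z, μ) := by
  have hInt : IntegrableOn (fun p : ℝ × ℝ => F (p.2, p.1)) (Set.Ioc 0 1 ×ˢ Set.Ioc 0 Z) volume := by
    have hc : Continuous fun p : ℝ × ℝ => F (p.2, p.1) := hF.comp continuous_swap
    exact (hc.continuousOn.integrableOn_compact (isCompact_Icc.prod isCompact_Icc)).mono_set
      (Set.prod_mono Set.Ioc_subset_Icc_self Set.Ioc_subset_Icc_self)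
  have hswap := MeasureTheory.integral_integral_swap (f := fun μ z => F (z, μ))
    (μ := volume.restrict (Set.Ioc 0 1)) (ν := volume.restrict (Set.Ioc 0 Z)) (by
      rw [Measure.prod_restrict]
      rw [Measure.volume_eq_prod] at hInt
      exact hInt)
  simp only [intervalIntegral.integral_of_le hZ, intervalIntegral.integral_of_le (zero_le_one (α := ℝ))]
  exact hswap

/-- Trace inequality for the slab `Ω = (0,Z) × (0,1)`:
the weighted L² norm of the traces at `z = 0` and `z = Z` (weight `μ`) is
bounded by `C_tr² · (‖v‖² + ‖μ ∂_z v‖²)` with `C_tr = 2/√(1 − e^{−2Z})`. -/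
theorem trace_inequality_slab
    (Z : ℝ) (hZ : 0 < Z) (v vz : ℝ × ℝ → ℝ)
    (hv : ContinuousOn v (Set.Icc 0 Z ×ˢ Set.Icc 0 1))
    (hvz : ContinuousOn vz (Set.Icc 0 Z ×ˢ Set.Icc 0 1))
    (hderiv : ∀ z ∈ Set.Icc (0:ℝ) Z, ∀ μ ∈ Set.Icc (0:ℝ) 1,
      HasDerivWithinAt (fun t => v (t, μ)) (vz (z, μ)) (Set.Icc 0 Z) z) :
    (∫ μ in (0:ℝ)..1, μ * (v (0, μ) ^ 2 + v (Z, μ) ^ 2)) ≤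
      (2 / Real.sqrt (1 - Real.exp (-2 * Z))) ^ 2 *
        ((∫ z in (0:ℝ)..Z, ∫ μ in (0:ℝ)..1, v (z, μ) ^ 2) +
         (∫ z in (0:ℝ)..Z, ∫ μ in (0:ℝ)..1, μ ^ 2 * vz (z, μ) ^ 2)) := by
  have hcl : IsClosed (Set.Icc (0:ℝ) Z ×ˢ Set.Icc (0:ℝ) 1) := isClosed_Icc.prod isClosed_Icc
  obtain ⟨V, hVc, hV⟩ := exists_cont_ext hcl hv
  obtain ⟨W, hWc, hW⟩ := exists_cont_ext hcl hvz
  have hE : 0 < 1 - Real.exp (-2 * Z) := by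
    have : Real.exp (-2 * Z) < 1 := Real.exp_lt_one_iff.2 (by linarith)
    linarith
  set K := 4 / (1 - Real.exp (-2 * Z)) with hK_def
  have hK0 : 0 < K := by positivity
  have hKrw : (2 / Real.sqrt (1 - Real.exp (-2 * Z))) ^ 2 = K := by
    rw [div_pow, Real.sq_sqrt hE.le, hK_def]; norm_num
  set G : ℝ → ℝ := fun μ => ∫ z in (0:ℝ)..Z, V (z, μ) ^ 2 with hG_def
  set H : ℝ → ℝ := fun μ => ∫ z in (0:ℝ)..Z, μ ^ 2 * W (z, μ) ^ 2 with hH_def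
  have hGc : Continuous G := by
    apply intervalIntegral.continuous_parametric_intervalIntegral_of_continuous'
      (f := fun μ z => V (z, μ) ^ 2)
    exact (hVc.comp continuous_swap).pow 2
  have hHc : Continuous H := by
    apply intervalIntegral.continuous_parametric_intervalIntegral_of_continuous'
      (f := fun μ z => μ ^ 2 * W (z, μ) ^ 2)
    exact ((continuous_fst.pow 2).mul ((hWc.comp continuous_swap).pow 2))
  have hG0 : ∀ μ : ℝ, 0 ≤ G μ :=
    fun μ => intervalIntegral.integral_nonneg hZ.le (fun x _ => sq_nonneg _)
  have hH0 : ∀ μ : ℝ, 0 ≤ H μ :=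
    fun μ => intervalIntegral.integral_nonneg hZ.le (fun x _ => by positivity)
  -- pointwise-in-μ trace bound
  have stepA : ∀ μ ∈ Set.Icc (0:ℝ) 1,
      μ * (V (0, μ) ^ 2 + V (Z, μ) ^ 2) ≤ K * (G μ + H μ) := by
    intro μ hμ
    rcases eq_or_lt_of_le hμ.1 with h0 | h0
    · rw [← h0]
      have := mul_nonneg hK0.le (add_nonneg (hG0 0) (hH0 0))
      simpa using this
    · have hmem : ∀ z ∈ Set.Icc (0:ℝ) Z, (z, μ) ∈ Set.Icc (0:ℝ) Z ×ˢ Set.Icc (0:ℝ) 1 :=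
        fun z hzz => ⟨hzz, hμ⟩
      have hfc : ContinuousOn (fun t => v (t, μ)) (Set.Icc 0 Z) :=
        hv.comp ((continuous_id.prodMk continuous_const).continuousOn) hmem
      have hgc : ContinuousOn (fun t => vz (t, μ)) (Set.Icc 0 Z) :=
        hvz.comp ((continuous_id.prodMk continuous_const).continuousOn) hmem
      have hcore := trace_core Z hZ μ h0 hμ.2 (fun t => v (t, μ)) (fun t => vz (t, μ))
        hfc hgc (fun z hzz => hderiv z hzz μ hμ)
      have e0 : V (0, μ) = v (0, μ) := hV _ (hmem 0 ⟨le_refl _, hZ.le⟩)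
      have eZ : V (Z, μ) = v (Z, μ) := hV _ (hmem Z ⟨hZ.le, le_refl _⟩)
      have eG : G μ = ∫ z in (0:ℝ)..Z, v (z, μ) ^ 2 := by
        apply intervalIntegral.integral_congr
        intro z hzz
        rw [Set.uIcc_of_le hZ.le] at hzz
        show V (z, μ) ^ 2 = v (z, μ) ^ 2
        rw [hV _ (hmem z hzz)]
      have eH : H μ = ∫ z in (0:ℝ)..Z, μ ^ 2 * vz (z, μ) ^ 2 := by
        apply intervalIntegral.integral_congr
        intro z hzz
        rw [Set.uIcc_of_le hZ.le] at hzz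
        show μ ^ 2 * W (z, μ) ^ 2 = μ ^ 2 * vz (z, μ) ^ 2
        rw [hW _ (hmem z hzz)]
      rw [e0, eZ, eG, eH]
      exact hcore
  -- integrate over μ
  have stepB : (∫ μ in (0:ℝ)..1, μ * (v (0, μ) ^ 2 + v (Z, μ) ^ 2)) ≤
      ∫ μ in (0:ℝ)..1, K * (G μ + H μ) := by
    have hcongr : (∫ μ in (0:ℝ)..1, μ * (v (0, μ) ^ 2 + v (Z, μ) ^ 2)) =
        ∫ μ in (0:ℝ)..1, μ * (V (0, μ) ^ 2 + V (Z, μ) ^ 2) := by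
      apply intervalIntegral.integral_congr
      intro μ hμ
      rw [Set.uIcc_of_le (zero_le_one (α := ℝ))] at hμ
      show μ * (v (0, μ) ^ 2 + v (Z, μ) ^ 2) = μ * (V (0, μ) ^ 2 + V (Z, μ) ^ 2)
      rw [hV _ ⟨⟨le_refl (0:ℝ), hZ.le⟩, hμ⟩, hV _ ⟨⟨hZ.le, le_refl Z⟩, hμ⟩]
    rw [hcongr]
    apply intervalIntegral.integral_mono_on zero_le_one
    · apply Continuous.intervalIntegrable
      exact continuous_id.mul (((hVc.comp (continuous_const.prodMk continuous_id)).pow 2).add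
        ((hVc.comp (continuous_const.prodMk continuous_id)).pow 2))
    · exact (continuous_const.mul (hGc.add hHc)).intervalIntegrable _ _
    · exact stepA
  -- swap the order of integration
  have hswapG : (∫ μ in (0:ℝ)..1, G μ) = ∫ z in (0:ℝ)..Z, ∫ μ in (0:ℝ)..1, V (z, μ) ^ 2 :=
    swap_int Z hZ.le (fun p => V p ^ 2) (hVc.pow 2)
  have hswapH : (∫ μ in (0:ℝ)..1, H μ) = ∫ z in (0:ℝ)..Z, ∫ μ in (0:ℝ)..1, μ ^ 2 * W (z, μ) ^ 2 :=
    swap_int Z hZ.le (fun p => p.2 ^ 2 * W p ^ 2) ((continuous_snd.pow 2).mul (hWc.pow 2))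
  have stepC : (∫ μ in (0:ℝ)..1, K * (G μ + H μ)) =
      K * ((∫ z in (0:ℝ)..Z, ∫ μ in (0:ℝ)..1, V (z, μ) ^ 2) +
           (∫ z in (0:ℝ)..Z, ∫ μ in (0:ℝ)..1, μ ^ 2 * W (z, μ) ^ 2)) := by
    rw [intervalIntegral.integral_const_mul,
      intervalIntegral.integral_add (hGc.intervalIntegrable _ _) (hHc.intervalIntegrable _ _),
      hswapG, hswapH]
  -- identify with the statement's right-hand side
  have hinner : ∀ z ∈ Set.uIcc (0:ℝ) Z,
      (∫ μ in (0:ℝ)..1, V (z, μ) ^ 2) = ∫ μ in (0:ℝ)..1, v (z, μ) ^ 2 := by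
    intro z hzz
    rw [Set.uIcc_of_le hZ.le] at hzz
    apply intervalIntegral.integral_congr
    intro μ hμ
    rw [Set.uIcc_of_le (zero_le_one (α := ℝ))] at hμ
    show V (z, μ) ^ 2 = v (z, μ) ^ 2
    rw [hV _ ⟨hzz, hμ⟩]
  have hinner' : ∀ z ∈ Set.uIcc (0:ℝ) Z,
      (∫ μ in (0:ℝ)..1, μ ^ 2 * W (z, μ) ^ 2) = ∫ μ in (0:ℝ)..1, μ ^ 2 * vz (z, μ) ^ 2 := by
    intro z hzz
    rw [Set.uIcc_of_le hZ.le] at hzz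
    apply intervalIntegral.integral_congr
    intro μ hμ
    rw [Set.uIcc_of_le (zero_le_one (α := ℝ))] at hμ
    show μ ^ 2 * W (z, μ) ^ 2 = μ ^ 2 * vz (z, μ) ^ 2
    rw [hW _ ⟨hzz, hμ⟩]
  have eout : (∫ z in (0:ℝ)..Z, ∫ μ in (0:ℝ)..1, V (z, μ) ^ 2) =
      ∫ z in (0:ℝ)..Z, ∫ μ in (0:ℝ)..1, v (z, μ) ^ 2 :=
    intervalIntegral.integral_congr hinner
  have eout' : (∫ z in (0:ℝ)..Z, ∫ μ in (0:ℝ)..1, μ ^ 2 * W (z, μ) ^ 2) =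
      ∫ z in (0:ℝ)..Z, ∫ μ in (0:ℝ)..1, μ ^ 2 * vz (z, μ) ^ 2 :=
    intervalIntegral.integral_congr hinner'
  rw [hKrw]
  calc (∫ μ in (0:ℝ)..1, μ * (v (0, μ) ^ 2 + v (Z, μ) ^ 2))
      ≤ ∫ μ in (0:ℝ)..1, K * (G μ + H μ) := stepB
    _ = K * ((∫ z in (0:ℝ)..Z, ∫ μ in (0:ℝ)..1, v (z, μ) ^ 2) +
         (∫ z in (0:ℝ)..Z, ∫ μ in (0:ℝ)..1, μ ^ 2 * vz (z, μ) ^ 2)) := by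
        rw [stepC, eout, eout']
end

section
/- Let E, J, Q be n × n real symmetric matrices with J positive definite, let 0 ≤ ε < 1 and 0 < γ₁ ≤ γ₂, and denote by J^{1/2} the positive definite square root of J and J^{−1/2} its inverse. Assume (i) γ₁·⟨J v, v⟩ ≤ ⟨E v, v⟩ ≤ γ₂·⟨J v, v⟩ for all v ∈ ℝⁿ, and (ii) ‖(J^{−1/2} − Q) v‖₂ ≤ ε·‖J^{−1/2} v‖₂ for all v ∈ ℝⁿ. Then for all w ∈ ℝⁿ, (1−ε)²·γ₁·‖w‖₂² ≤ ⟨Q E Q w, w⟩ ≤ (1+ε)²·γ₂·‖w‖₂². -/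
open Matrix

/-- The old Mathlib `Matrix.PosSemidef.sqrt` (removed since), with its original definition. -/
noncomputable def Matrix.PosSemidef.sqrt {m : Type*} [Fintype m] [DecidableEq m]
    {A : Matrix m m ℝ} (hA : A.PosSemidef) : Matrix m m ℝ :=
  hA.1.eigenvectorUnitary.1 * diagonal (Real.sqrt ∘ hA.1.eigenvalues) *
    (star hA.1.eigenvectorUnitary : Matrix m m ℝ)

/-- Euclidean norm on `Fin n → ℝ`. -/
noncomputable def eNorm {n : ℕ} (v : Fin n → ℝ) : ℝ := Real.sqrt (∑ i, v i ^ 2)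

lemma eNorm_eq {n : ℕ} (v : Fin n → ℝ) :
    eNorm v = ‖(WithLp.equiv 2 (Fin n → ℝ)).symm v‖ := by
  rw [EuclideanSpace.norm_eq, eNorm]
  simp [sq_abs]

lemma eNorm_nonneg {n : ℕ} (v : Fin n → ℝ) : 0 ≤ eNorm v := Real.sqrt_nonneg _

lemma eNorm_sq {n : ℕ} (v : Fin n → ℝ) : eNorm v ^ 2 = v ⬝ᵥ v := by
  rw [eNorm, Real.sq_sqrt (by positivity)]
  simp [dotProduct, pow_two]

lemma eNorm_CS {n : ℕ} (u v : Fin n → ℝ) : u ⬝ᵥ v ≤ eNorm u * eNorm v := by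
  rw [eNorm_eq, eNorm_eq]
  have h := real_inner_le_norm ((WithLp.equiv 2 (Fin n → ℝ)).symm u)
    ((WithLp.equiv 2 (Fin n → ℝ)).symm v)
  simpa [PiLp.inner_apply, RCLike.inner_apply, dotProduct, mul_comm] using h

lemma eNorm_sub_le {n : ℕ} (u v : Fin n → ℝ) :
    eNorm u ≤ eNorm (u - v) + eNorm v := by
  rw [eNorm_eq, eNorm_eq, eNorm_eq, WithLp.equiv_symm_apply, WithLp.toLp_sub]
  calc ‖(WithLp.equiv 2 (Fin n → ℝ)).symm u‖
      = ‖((WithLp.equiv 2 (Fin n → ℝ)).symm u - (WithLp.equiv 2 (Fin n → ℝ)).symm v) +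
          (WithLp.equiv 2 (Fin n → ℝ)).symm v‖ := by rw [sub_add_cancel]
    _ ≤ _ := norm_add_le _ _

lemma eNorm_sub_rev {n : ℕ} (u v : Fin n → ℝ) : eNorm (u - v) = eNorm (v - u) := by
  rw [eNorm_eq, eNorm_eq, WithLp.equiv_symm_apply, WithLp.toLp_sub, WithLp.toLp_sub, norm_sub_rev]

lemma eNorm_eq_zero {n : ℕ} {v : Fin n → ℝ} (h : eNorm v = 0) : v = 0 := by
  rw [eNorm_eq, norm_eq_zero] at h
  simpa using congrArg (WithLp.equiv 2 (Fin n → ℝ)) h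

lemma symm_dot {n : ℕ} {A : Matrix (Fin n) (Fin n) ℝ} (hA : A.IsSymm) (x y : Fin n → ℝ) :
    A.mulVec x ⬝ᵥ y = x ⬝ᵥ A.mulVec y := by
  rw [dotProduct_comm, dotProduct_mulVec, ← mulVec_transpose, hA.eq, dotProduct_comm]

/-- Spectral equivalence of the exponential-sum preconditioned matrix (Lemma 3.1):
if `γ₁⟨Jv,v⟩ ≤ ⟨Ev,v⟩ ≤ γ₂⟨Jv,v⟩` and `Q` approximates the inverse square root
`J^{−1/2}` with relative accuracy `ε < 1` in the Euclidean norm, then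
`(1−ε)²γ₁‖w‖² ≤ ⟨QEQw, w⟩ ≤ (1+ε)²γ₂‖w‖²`. -/
theorem preconditioned_spectral_equivalence
    {n : ℕ} (E J Q : Matrix (Fin n) (Fin n) ℝ)
    (hE : E.IsSymm) (hQ : Q.IsSymm) (hJ : J.PosDef)
    (ε γ₁ γ₂ : ℝ) (hε0 : 0 ≤ ε) (hε1 : ε < 1) (hγ₁ : 0 < γ₁) (hγ₁₂ : γ₁ ≤ γ₂)
    (hlow : ∀ v : Fin n → ℝ, γ₁ * (J.mulVec v ⬝ᵥ v) ≤ E.mulVec v ⬝ᵥ v)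
    (hup : ∀ v : Fin n → ℝ, E.mulVec v ⬝ᵥ v ≤ γ₂ * (J.mulVec v ⬝ᵥ v))
    (happrox : ∀ v : Fin n → ℝ,
      Real.sqrt (∑ i, ((((Matrix.PosSemidef.sqrt hJ.posSemidef)⁻¹ - Q).mulVec v) i) ^ 2) ≤
        ε * Real.sqrt (∑ i, (((Matrix.PosSemidef.sqrt hJ.posSemidef)⁻¹.mulVec v) i) ^ 2)) :
    ∀ w : Fin n → ℝ,
      (1 - ε) ^ 2 * γ₁ * (w ⬝ᵥ w) ≤ (Q * E * Q).mulVec w ⬝ᵥ w ∧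
      (Q * E * Q).mulVec w ⬝ᵥ w ≤ (1 + ε) ^ 2 * γ₂ * (w ⬝ᵥ w) := by
  set S := Matrix.PosSemidef.sqrt hJ.posSemidef with hSdef
  -- S is symmetric
  have hSsym : S.IsSymm := by
    rw [Matrix.IsSymm, hSdef, Matrix.PosSemidef.sqrt]
    simp [Matrix.transpose_mul, Matrix.star_eq_conjTranspose, Matrix.conjTranspose_eq_transpose_of_trivial, Matrix.mul_assoc]
  have hSS : S * S = J := by
    have hU : (star hJ.posSemidef.1.eigenvectorUnitary : Matrix (Fin n) (Fin n) ℝ) *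
        hJ.posSemidef.1.eigenvectorUnitary.1 = 1 := Unitary.coe_star_mul_self _
    have hD : diagonal (Real.sqrt ∘ hJ.posSemidef.1.eigenvalues) *
        diagonal (Real.sqrt ∘ hJ.posSemidef.1.eigenvalues) =
        diagonal (RCLike.ofReal ∘ hJ.posSemidef.1.eigenvalues) := by
      rw [diagonal_mul_diagonal]
      congr 1; funext i
      simp [Real.mul_self_sqrt (hJ.posSemidef.eigenvalues_nonneg i)]
    conv_rhs => rw [hJ.posSemidef.1.spectral_theorem, Unitary.conjStarAlgAut_apply]
    rw [hSdef, Matrix.PosSemidef.sqrt]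
    calc _ = hJ.posSemidef.1.eigenvectorUnitary.1 * diagonal (Real.sqrt ∘ hJ.posSemidef.1.eigenvalues) *
        ((star hJ.posSemidef.1.eigenvectorUnitary : Matrix (Fin n) (Fin n) ℝ) *
        hJ.posSemidef.1.eigenvectorUnitary.1) * diagonal (Real.sqrt ∘ hJ.posSemidef.1.eigenvalues) *
        (star hJ.posSemidef.1.eigenvectorUnitary : Matrix (Fin n) (Fin n) ℝ) := by
          simp only [Matrix.mul_assoc]
      _ = _ := by rw [hU, Matrix.mul_one, Matrix.mul_assoc _ (diagonal _) (diagonal _), hD]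
  -- S is invertible
  have hdet : IsUnit S.det := by
    have hJd : 0 < J.det := hJ.det_pos
    rw [← hSS, Matrix.det_mul] at hJd
    exact (mul_self_pos.mp hJd).isUnit
  have hTS : S⁻¹ * S = 1 := Matrix.nonsing_inv_mul S hdet
  -- key approximation inequality
  have key1 : ∀ v : Fin n → ℝ, eNorm (Q.mulVec (S.mulVec v) - v) ≤ ε * eNorm v := by
    intro v
    have h := happrox (S.mulVec v)
    have e1 : (S⁻¹ - Q).mulVec (S.mulVec v) = v - Q.mulVec (S.mulVec v) := by
      rw [Matrix.sub_mulVec, Matrix.mulVec_mulVec, hTS, Matrix.one_mulVec]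
    have e2 : S⁻¹.mulVec (S.mulVec v) = v := by
      rw [Matrix.mulVec_mulVec, hTS, Matrix.one_mulVec]
    rw [e1, e2] at h
    rw [eNorm_sub_rev]
    unfold eNorm
    exact h
  -- lower and upper norm bounds for QS
  have keyUp : ∀ v : Fin n → ℝ, eNorm (Q.mulVec (S.mulVec v)) ≤ (1 + ε) * eNorm v := by
    intro v
    have h := eNorm_sub_le (Q.mulVec (S.mulVec v)) v
    have := key1 v
    linarith
  have keyLow : ∀ v : Fin n → ℝ, (1 - ε) * eNorm v ≤ eNorm (Q.mulVec (S.mulVec v)) := by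
    intro v
    have h : eNorm v ≤ eNorm (v - Q.mulVec (S.mulVec v)) + eNorm (Q.mulVec (S.mulVec v)) :=
      eNorm_sub_le v _
    have h2 : eNorm (v - Q.mulVec (S.mulVec v)) = eNorm (Q.mulVec (S.mulVec v) - v) :=
      eNorm_sub_rev _ _
    have := key1 v
    linarith
  -- surjectivity of v ↦ Q (S v)
  have hsurj : ∀ w : Fin n → ℝ, ∃ v, Q.mulVec (S.mulVec v) = w := by
    have hinj : Function.Injective (Q * S).mulVecLin := by
      rw [← LinearMap.ker_eq_bot, LinearMap.ker_eq_bot']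
      intro v hv
      have hv' : Q.mulVec (S.mulVec v) = 0 := by
        have : (Q * S).mulVec v = 0 := hv
        rwa [← Matrix.mulVec_mulVec] at this
      have h1 := keyLow v
      rw [hv'] at h1
      have h0 : eNorm (0 : Fin n → ℝ) = 0 := by
        unfold eNorm; simp
      rw [h0] at h1
      have hvn : eNorm v = 0 := le_antisymm (by nlinarith [eNorm_nonneg v]) (eNorm_nonneg v)
      exact eNorm_eq_zero hvn
    have hs := (LinearMap.injective_iff_surjective (f := (Q * S).mulVecLin)).mp hinj
    intro w
    obtain ⟨v, hv⟩ := hs w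
    exact ⟨v, by rw [Matrix.mulVec_mulVec]; exact hv⟩
  -- adjoint identity
  have hadj : ∀ x y : Fin n → ℝ,
      S.mulVec (Q.mulVec x) ⬝ᵥ y = x ⬝ᵥ Q.mulVec (S.mulVec y) := by
    intro x y
    rw [symm_dot hSsym, symm_dot hQ]
  intro w
  set x := S.mulVec (Q.mulVec w) with hxdef
  -- upper bound on ‖x‖
  have hxUp : eNorm x ≤ (1 + ε) * eNorm w := by
    rcases eq_or_lt_of_le (eNorm_nonneg x) with h0 | h0
    · rw [← h0]
      nlinarith [eNorm_nonneg w]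
    · have h1 : eNorm x ^ 2 = w ⬝ᵥ Q.mulVec (S.mulVec x) := by
        rw [eNorm_sq]
        nth_rewrite 1 [hxdef]
        exact hadj w x
      have h2 : w ⬝ᵥ Q.mulVec (S.mulVec x) ≤ eNorm w * ((1 + ε) * eNorm x) :=
        le_trans (eNorm_CS _ _) (by
          have := keyUp x
          nlinarith [eNorm_nonneg w])
      nlinarith
  -- lower bound on ‖x‖
  have hxLow : (1 - ε) * eNorm w ≤ eNorm x := by
    obtain ⟨v, hv⟩ := hsurj w
    have h1 : eNorm w ^ 2 = x ⬝ᵥ v := by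
      rw [eNorm_sq]
      nth_rewrite 2 [← hv]
      rw [← hadj w v]
    have h2 : (1 - ε) * eNorm v ≤ eNorm w := by
      have := keyLow v; rw [hv] at this; exact this
    have h3 : x ⬝ᵥ v ≤ eNorm x * eNorm v := eNorm_CS _ _
    rcases eq_or_lt_of_le (eNorm_nonneg w) with h0 | h0
    · rw [← h0]
      nlinarith [eNorm_nonneg x]
    · nlinarith [eNorm_nonneg v, eNorm_nonneg x]
  -- quadratic form identities
  have hquad : (Q * E * Q).mulVec w ⬝ᵥ w = E.mulVec (Q.mulVec w) ⬝ᵥ Q.mulVec w := by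
    rw [← Matrix.mulVec_mulVec, ← Matrix.mulVec_mulVec, symm_dot hQ]
  have hJquad : J.mulVec (Q.mulVec w) ⬝ᵥ Q.mulVec w = eNorm x ^ 2 := by
    rw [eNorm_sq, ← hSS, ← Matrix.mulVec_mulVec, symm_dot hSsym]
  have hww : w ⬝ᵥ w = eNorm w ^ 2 := (eNorm_sq w).symm
  constructor
  · have := hlow (Q.mulVec w)
    rw [hJquad] at this
    rw [hquad, hww]
    have hsq : ((1 - ε) * eNorm w) ^ 2 ≤ eNorm x ^ 2 := by
      have h1 : (0:ℝ) ≤ (1 - ε) * eNorm w := by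
        have := eNorm_nonneg w; nlinarith
      nlinarith
    nlinarith
  · have := hup (Q.mulVec w)
    rw [hJquad] at this
    rw [hquad, hww]
    have hsq : eNorm x ^ 2 ≤ ((1 + ε) * eNorm w) ^ 2 := by
      nlinarith [eNorm_nonneg x]
    have hγ₂ : 0 < γ₂ := lt_of_lt_of_le hγ₁ hγ₁₂
    nlinarith
end

section
/- Let J, N, r, s be natural numbers, δ ≥ 0, and let V, W ∈ ℝ^{J×N} have singular value decompositions V = Σ_{k=1}^{r} σ_k u_k v_kᵀ and W = Σ_{k=1}^{s} τ_k p_k q_kᵀ, where σ_k > 0, the u_k are orthonormal in ℝ^J and the v_k orthonormal in ℝ^N, and likewise τ_k > 0 with p_k orthonormal in ℝ^J and q_k orthonormal in ℝ^N. Define the soft-thresholded matrices S_δ(V) := Σ_{k=1}^{r} max(σ_k − δ, 0)·u_k v_kᵀ and S_δ(W) := Σ_{k=1}^{s} max(τ_k − δ, 0)·p_k q_kᵀ. Then ‖S_δ(V) − S_δ(W)‖_F ≤ ‖V − W‖_F, where ‖·‖_F denotes the Frobenius norm. -/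
open Matrix

/-- Frobenius norm of a `J × N` real matrix. -/
noncomputable def frobNorm {J N : ℕ} (M : Matrix (Fin J) (Fin N) ℝ) : ℝ :=
  Real.sqrt (∑ i, ∑ j, M i j ^ 2)

/-! ### Auxiliary machinery: a Frobenius inner product and its basic properties -/

/-- Frobenius inner product of two matrices. -/
noncomputable def minner {J N : ℕ} (A B : Matrix (Fin J) (Fin N) ℝ) : ℝ :=
  ∑ i, ∑ j, A i j * B i j

lemma minner_comm {J N : ℕ} (A B : Matrix (Fin J) (Fin N) ℝ) : minner A B = minner B A := by
  simp [minner, mul_comm]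

lemma minner_self_nonneg {J N : ℕ} (A : Matrix (Fin J) (Fin N) ℝ) : 0 ≤ minner A A :=
  Finset.sum_nonneg fun _ _ => Finset.sum_nonneg fun _ _ => mul_self_nonneg _

lemma frobNorm_eq_sqrt_minner {J N : ℕ} (A : Matrix (Fin J) (Fin N) ℝ) :
    frobNorm A = Real.sqrt (minner A A) := by
  simp [frobNorm, minner, sq]

lemma minner_sum_left {J N r : ℕ} (M : Fin r → Matrix (Fin J) (Fin N) ℝ)
    (B : Matrix (Fin J) (Fin N) ℝ) :
    minner (∑ k, M k) B = ∑ k, minner (M k) B := by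
  unfold minner
  simp_rw [Matrix.sum_apply, Finset.sum_mul]
  calc (∑ i, ∑ j, ∑ k, M k i j * B i j)
      = ∑ i, ∑ k, ∑ j, M k i j * B i j :=
        Finset.sum_congr rfl fun i _ => Finset.sum_comm
    _ = ∑ k, ∑ i, ∑ j, M k i j * B i j := Finset.sum_comm

lemma minner_smul_left {J N : ℕ} (c : ℝ) (A B : Matrix (Fin J) (Fin N) ℝ) :
    minner (c • A) B = c * minner A B := by
  simp [minner, Finset.mul_sum, mul_assoc]

lemma minner_add_left {J N : ℕ} (A B C : Matrix (Fin J) (Fin N) ℝ) :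
    minner (A + B) C = minner A C + minner B C := by
  simp [minner, Matrix.add_apply, add_mul, Finset.sum_add_distrib]

lemma minner_sub_left {J N : ℕ} (A B C : Matrix (Fin J) (Fin N) ℝ) :
    minner (A - B) C = minner A C - minner B C := by
  simp [minner, Matrix.sub_apply, sub_mul, Finset.sum_sub_distrib]

lemma minner_add_right {J N : ℕ} (A B C : Matrix (Fin J) (Fin N) ℝ) :
    minner A (B + C) = minner A B + minner A C := by
  rw [minner_comm, minner_add_left, minner_comm B A, minner_comm C A]

lemma minner_sub_right {J N : ℕ} (A B C : Matrix (Fin J) (Fin N) ℝ) :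
    minner A (B - C) = minner A B - minner A C := by
  rw [minner_comm, minner_sub_left, minner_comm B A, minner_comm C A]

lemma minner_rank_one {J N : ℕ} (u p : Fin J → ℝ) (v q : Fin N → ℝ) :
    minner (vecMulVec u v) (vecMulVec p q) = (u ⬝ᵥ p) * (v ⬝ᵥ q) := by
  simp only [minner, vecMulVec_apply, dotProduct, Finset.sum_mul_sum]
  exact Finset.sum_congr rfl fun i _ => Finset.sum_congr rfl fun j _ => by ring

lemma minner_sum_rank_one {J N r s : ℕ}
    (c : Fin r → ℝ) (u : Fin r → Fin J → ℝ) (v : Fin r → Fin N → ℝ)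
    (d : Fin s → ℝ) (p : Fin s → Fin J → ℝ) (q : Fin s → Fin N → ℝ) :
    minner (∑ k, c k • vecMulVec (u k) (v k)) (∑ l, d l • vecMulVec (p l) (q l))
      = ∑ k, ∑ l, c k * d l * ((u k ⬝ᵥ p l) * (v k ⬝ᵥ q l)) := by
  rw [minner_sum_left]
  refine Finset.sum_congr rfl fun k _ => ?_
  rw [minner_comm, minner_sum_left]
  refine Finset.sum_congr rfl fun l _ => ?_
  rw [minner_smul_left, minner_comm, minner_smul_left, minner_rank_one]
  ring

/-! ### Bessel's inequality -/

lemma dot_sum_right {J n : ℕ} (x : Fin J → ℝ) (f : Fin n → Fin J → ℝ) :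
    x ⬝ᵥ (∑ l, f l) = ∑ l, x ⬝ᵥ f l := by
  simp only [dotProduct, Finset.sum_apply, Finset.mul_sum]
  exact Finset.sum_comm

lemma dot_sum_left {J n : ℕ} (x : Fin J → ℝ) (f : Fin n → Fin J → ℝ) :
    (∑ l, f l) ⬝ᵥ x = ∑ l, f l ⬝ᵥ x := by
  simp only [dotProduct, Finset.sum_apply, Finset.sum_mul]
  exact Finset.sum_comm

lemma bessel {J n : ℕ} (p : Fin n → Fin J → ℝ)
    (hp : ∀ k l, p k ⬝ᵥ p l = if k = l then 1 else 0) (x : Fin J → ℝ) :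
    ∑ l, (x ⬝ᵥ p l) ^ 2 ≤ x ⬝ᵥ x := by
  set c : Fin n → ℝ := fun l => x ⬝ᵥ p l with hc
  have h0 : (0:ℝ) ≤ (x - ∑ l, c l • p l) ⬝ᵥ (x - ∑ l, c l • p l) :=
    Finset.sum_nonneg fun i _ => mul_self_nonneg _
  have hexp : (x - ∑ l, c l • p l) ⬝ᵥ (x - ∑ l, c l • p l)
      = x ⬝ᵥ x - ∑ l, c l ^ 2 := by
    rw [sub_dotProduct, dotProduct_sub, dotProduct_sub]
    have h1 : x ⬝ᵥ (∑ l, c l • p l) = ∑ l, c l ^ 2 := by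
      rw [dot_sum_right]
      exact Finset.sum_congr rfl fun l _ => by rw [dotProduct_smul]; simp [hc, sq, mul_comm]
    have h2 : (∑ l, c l • p l) ⬝ᵥ x = ∑ l, c l ^ 2 := by
      rw [dot_sum_left]
      refine Finset.sum_congr rfl fun l _ => ?_
      rw [smul_dotProduct]
      have : p l ⬝ᵥ x = c l := by simp [hc, dotProduct, mul_comm]
      simp [this, sq]
    have h3 : (∑ l, c l • p l) ⬝ᵥ (∑ l, c l • p l) = ∑ l, c l ^ 2 := by
      rw [dot_sum_left]
      refine Finset.sum_congr rfl fun l _ => ?_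
      rw [smul_dotProduct, dot_sum_right]
      simp_rw [dotProduct_smul, hp]
      rw [Finset.sum_eq_single l] <;> simp_all [sq, eq_comm]
    rw [h1, h2, h3]; ring
  linarith [hexp ▸ h0]

/-! ### The key cross-term bound -/

lemma cross_bound {J N n : ℕ} (δ : ℝ) (hδ : 0 ≤ δ)
    (g : Fin n → ℝ) (hg0 : ∀ l, 0 ≤ g l) (hgδ : ∀ l, g l ≤ δ)
    (p : Fin n → Fin J → ℝ) (q : Fin n → Fin N → ℝ)
    (hp : ∀ k l, p k ⬝ᵥ p l = if k = l then 1 else 0)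
    (hq : ∀ k l, q k ⬝ᵥ q l = if k = l then 1 else 0)
    (x : Fin J → ℝ) (y : Fin N → ℝ) (hx : x ⬝ᵥ x = 1) (hy : y ⬝ᵥ y = 1) :
    ∑ l, g l * ((x ⬝ᵥ p l) * (y ⬝ᵥ q l)) ≤ δ := by
  have step1 : ∑ l, g l * ((x ⬝ᵥ p l) * (y ⬝ᵥ q l))
      ≤ δ * ∑ l, |x ⬝ᵥ p l| * |y ⬝ᵥ q l| := by
    rw [Finset.mul_sum]
    refine Finset.sum_le_sum fun l _ => ?_
    have habs : (x ⬝ᵥ p l) * (y ⬝ᵥ q l) ≤ |x ⬝ᵥ p l| * |y ⬝ᵥ q l| := by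
      rw [← abs_mul]; exact le_abs_self _
    calc g l * ((x ⬝ᵥ p l) * (y ⬝ᵥ q l))
        ≤ g l * (|x ⬝ᵥ p l| * |y ⬝ᵥ q l|) := mul_le_mul_of_nonneg_left habs (hg0 l)
      _ ≤ δ * (|x ⬝ᵥ p l| * |y ⬝ᵥ q l|) :=
          mul_le_mul_of_nonneg_right (hgδ l) (mul_nonneg (abs_nonneg _) (abs_nonneg _))
  have hCS : (∑ l, |x ⬝ᵥ p l| * |y ⬝ᵥ q l|) ^ 2
      ≤ (∑ l, (x ⬝ᵥ p l) ^ 2) * ∑ l, (y ⬝ᵥ q l) ^ 2 := by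
    simpa [sq_abs] using Finset.sum_mul_sq_le_sq_mul_sq Finset.univ
      (fun l => |x ⬝ᵥ p l|) (fun l => |y ⬝ᵥ q l|)
  have hb1 : ∑ l, (x ⬝ᵥ p l) ^ 2 ≤ 1 := hx ▸ bessel p hp x
  have hb2 : ∑ l, (y ⬝ᵥ q l) ^ 2 ≤ 1 := hy ▸ bessel q hq y
  have hS0 : 0 ≤ ∑ l, |x ⬝ᵥ p l| * |y ⬝ᵥ q l| :=
    Finset.sum_nonneg fun l _ => mul_nonneg (abs_nonneg _) (abs_nonneg _)
  have hb1' : 0 ≤ ∑ l, (x ⬝ᵥ p l) ^ 2 := Finset.sum_nonneg fun l _ => sq_nonneg _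
  have hS1 : ∑ l, |x ⬝ᵥ p l| * |y ⬝ᵥ q l| ≤ 1 := by nlinarith
  nlinarith

/-- Scalar identity: `max (t - δ) 0 * min t δ = δ * max (t - δ) 0`. -/
lemma soft_mul_clip (δ t : ℝ) : max (t - δ) 0 * min t δ = δ * max (t - δ) 0 := by
  rcases le_total t δ with h | h
  · simp [max_eq_right (by linarith : t - δ ≤ 0)]
  · simp [min_eq_right h, mul_comm]

/-! ### Main theorem -/

/-- Non-expansiveness of soft thresholding of singular values (Proposition 4.2):
if `V = Σ σ_k u_k v_kᵀ` and `W = Σ τ_k p_k q_kᵀ` are singular value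
decompositions, then replacing each singular value `σ` by `max(σ − δ, 0)` is a
non-expansive operation in the Frobenius norm. -/
theorem soft_thresholding_nonexpansive
    {J N r s : ℕ} (δ : ℝ) (hδ : 0 ≤ δ)
    (σ : Fin r → ℝ) (u : Fin r → Fin J → ℝ) (v : Fin r → Fin N → ℝ)
    (τ : Fin s → ℝ) (p : Fin s → Fin J → ℝ) (q : Fin s → Fin N → ℝ)
    (hσ : ∀ k, 0 < σ k) (hτ : ∀ k, 0 < τ k)
    (hu : ∀ k l, u k ⬝ᵥ u l = if k = l then 1 else 0)
    (hv : ∀ k l, v k ⬝ᵥ v l = if k = l then 1 else 0)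
    (hp : ∀ k l, p k ⬝ᵥ p l = if k = l then 1 else 0)
    (hq : ∀ k l, q k ⬝ᵥ q l = if k = l then 1 else 0)
    (V W : Matrix (Fin J) (Fin N) ℝ)
    (hV : V = ∑ k, σ k • Matrix.vecMulVec (u k) (v k))
    (hW : W = ∑ k, τ k • Matrix.vecMulVec (p k) (q k)) :
    frobNorm ((∑ k, max (σ k - δ) 0 • Matrix.vecMulVec (u k) (v k)) -
        (∑ k, max (τ k - δ) 0 • Matrix.vecMulVec (p k) (q k))) ≤
      frobNorm (V - W) := by
  -- soft-thresholded and residual parts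
  set SV : Matrix (Fin J) (Fin N) ℝ := ∑ k, max (σ k - δ) 0 • vecMulVec (u k) (v k) with hSV
  set SW : Matrix (Fin J) (Fin N) ℝ := ∑ k, max (τ k - δ) 0 • vecMulVec (p k) (q k) with hSW
  set DV : Matrix (Fin J) (Fin N) ℝ := ∑ k, min (σ k) δ • vecMulVec (u k) (v k) with hDV
  set DW : Matrix (Fin J) (Fin N) ℝ := ∑ k, min (τ k) δ • vecMulVec (p k) (q k) with hDW
  -- decomposition V = SV + DV, W = SW + DW
  have hVdec : V = SV + DV := by
    rw [hV, hSV, hDV, ← Finset.sum_add_distrib]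
    refine Finset.sum_congr rfl fun k _ => ?_
    rw [← add_smul]
    congr 1
    rcases le_total (σ k) δ with h | h
    · simp [max_eq_right (by linarith : σ k - δ ≤ 0), min_eq_left h]
    · simp [max_eq_left (by linarith : (0:ℝ) ≤ σ k - δ), min_eq_right h]
  have hWdec : W = SW + DW := by
    rw [hW, hSW, hDW, ← Finset.sum_add_distrib]
    refine Finset.sum_congr rfl fun k _ => ?_
    rw [← add_smul]
    congr 1
    rcases le_total (τ k) δ with h | h
    · simp [max_eq_right (by linarith : τ k - δ ≤ 0), min_eq_left h]
    · simp [max_eq_left (by linarith : (0:ℝ) ≤ τ k - δ), min_eq_right h]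
  -- cross term is nonnegative
  have hmSVDV : minner SV DV = ∑ k, δ * max (σ k - δ) 0 := by
    rw [hSV, hDV, minner_sum_rank_one]
    refine Finset.sum_congr rfl fun k _ => ?_
    simp_rw [hu, hv]
    rw [Finset.sum_eq_single k]
    · simp [soft_mul_clip]
    · intro b _ hb; simp [Ne.symm hb]
    · simp
  have hmSWDW : minner SW DW = ∑ k, δ * max (τ k - δ) 0 := by
    rw [hSW, hDW, minner_sum_rank_one]
    refine Finset.sum_congr rfl fun k _ => ?_
    simp_rw [hp, hq]
    rw [Finset.sum_eq_single k]
    · simp [soft_mul_clip]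
    · intro b _ hb; simp [Ne.symm hb]
    · simp
  have hmSVDW : minner SV DW ≤ ∑ k, δ * max (σ k - δ) 0 := by
    rw [hSV, hDW, minner_sum_rank_one]
    refine Finset.sum_le_sum fun k _ => ?_
    have hsum : ∑ l, min (τ l) δ * ((u k ⬝ᵥ p l) * (v k ⬝ᵥ q l)) ≤ δ := by
      refine cross_bound δ hδ _ (fun l => le_min (hτ l).le hδ) (fun l => min_le_right _ _)
        p q hp hq (u k) (v k) ?_ ?_
      · simpa using hu k k
      · simpa using hv k k
    calc (∑ l, max (σ k - δ) 0 * min (τ l) δ * ((u k ⬝ᵥ p l) * (v k ⬝ᵥ q l)))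
        = max (σ k - δ) 0 * ∑ l, min (τ l) δ * ((u k ⬝ᵥ p l) * (v k ⬝ᵥ q l)) := by
          rw [Finset.mul_sum]; exact Finset.sum_congr rfl fun l _ => by ring
      _ ≤ max (σ k - δ) 0 * δ := mul_le_mul_of_nonneg_left hsum (le_max_right _ _)
      _ = δ * max (σ k - δ) 0 := mul_comm _ _
  have hmSWDV : minner SW DV ≤ ∑ k, δ * max (τ k - δ) 0 := by
    rw [hSW, hDV, minner_sum_rank_one]
    refine Finset.sum_le_sum fun k _ => ?_
    have hsum : ∑ l, min (σ l) δ * ((p k ⬝ᵥ u l) * (q k ⬝ᵥ v l)) ≤ δ := by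
      refine cross_bound δ hδ _ (fun l => le_min (hσ l).le hδ) (fun l => min_le_right _ _)
        u v hu hv (p k) (q k) ?_ ?_
      · simpa using hp k k
      · simpa using hq k k
    calc (∑ l, max (τ k - δ) 0 * min (σ l) δ * ((p k ⬝ᵥ u l) * (q k ⬝ᵥ v l)))
        = max (τ k - δ) 0 * ∑ l, min (σ l) δ * ((p k ⬝ᵥ u l) * (q k ⬝ᵥ v l)) := by
          rw [Finset.mul_sum]; exact Finset.sum_congr rfl fun l _ => by ring
      _ ≤ max (τ k - δ) 0 * δ := mul_le_mul_of_nonneg_left hsum (le_max_right _ _)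
      _ = δ * max (τ k - δ) 0 := mul_comm _ _
  have hcross : 0 ≤ minner (SV - SW) (DV - DW) := by
    rw [minner_sub_left, minner_sub_right, minner_sub_right]
    linarith [hmSVDV, hmSWDW, hmSVDW, hmSWDV]
  -- finish
  have hdecomp : V - W = (SV - SW) + (DV - DW) := by
    rw [hVdec, hWdec]; abel
  have hkey : minner (SV - SW) (SV - SW) ≤ minner (V - W) (V - W) := by
    rw [hdecomp, minner_add_left, minner_add_right, minner_add_right]
    have h1 : minner (DV - DW) (SV - SW) = minner (SV - SW) (DV - DW) := minner_comm _ _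
    linarith [minner_self_nonneg (DV - DW), hcross, h1]
  rw [frobNorm_eq_sqrt_minner, frobNorm_eq_sqrt_minner]
  exact Real.sqrt_le_sqrt hkey
end

section
/- Let A be an n × n real symmetric matrix and 0 < γ₁ ≤ γ₂ with γ₁‖v‖₂² ≤ ⟨A v, v⟩ ≤ γ₂‖v‖₂² for all v ∈ ℝⁿ, let f ∈ ℝⁿ, ω = 2/(γ₁+γ₂), ρ = (γ₂−γ₁)/(γ₂+γ₁), and let w* ∈ ℝⁿ be the unique solution of A w* = f. Let S : ℝⁿ → ℝⁿ be non-expansive, i.e. ‖S(x) − S(y)‖₂ ≤ ‖x − y‖₂ for all x, y. Then the map T(x) := S(x − ω(A x − f)) has a unique fixed point w^δ ∈ ℝⁿ; for any x₀ ∈ ℝⁿ the iterates x_{k+1} = T(x_k) satisfy ‖x_k − w^δ‖₂ ≤ ρ^k ‖x₀ − w^δ‖₂; and moreover (1+ρ)^{−1}·‖S(w*) − w*‖₂ ≤ ‖w^δ − w*‖₂ ≤ (1−ρ)^{−1}·‖S(w*) − w*‖₂. -/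
open Matrix

/-- Euclidean norm of a vector in `ℝⁿ`. -/
noncomputable def euclNorm {n : ℕ} (x : Fin n → ℝ) : ℝ :=
  Real.sqrt (∑ i, x i ^ 2)


lemma euclNorm_eq_norm {n : ℕ} (x : Fin n → ℝ) :
    euclNorm x = ‖(WithLp.equiv 2 (Fin n → ℝ)).symm x‖ := by
  simp [euclNorm, EuclideanSpace.norm_eq, Real.norm_eq_abs, sq_abs]

lemma euclNorm_eq_sqrt_dot {n : ℕ} (x : Fin n → ℝ) :
    euclNorm x = Real.sqrt (x ⬝ᵥ x) := by
  simp [euclNorm, dotProduct, pow_two]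

lemma dot_self_nonneg {n : ℕ} (x : Fin n → ℝ) : 0 ≤ x ⬝ᵥ x :=
  Finset.sum_nonneg fun i _ => mul_self_nonneg _

lemma opbound {n : ℕ} (B : Matrix (Fin n) (Fin n) ℝ)
    (hsym : ∀ x y, B.mulVec x ⬝ᵥ y = x ⬝ᵥ B.mulVec y)
    (ρ : ℝ) (hρ : 0 ≤ ρ)
    (h : ∀ v, |B.mulVec v ⬝ᵥ v| ≤ ρ * (v ⬝ᵥ v)) (v : Fin n → ℝ) :
    B.mulVec v ⬝ᵥ B.mulVec v ≤ ρ^2 * (v ⬝ᵥ v) := by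
  set y := B.mulVec v with hy
  set a := v ⬝ᵥ v with ha
  set b := y ⬝ᵥ y with hb
  have ha0 : 0 ≤ a := dot_self_nonneg v
  have hb0 : 0 ≤ b := dot_self_nonneg y
  have key : ∀ t : ℝ, 0 < t → 4 * b ≤ 2 * ρ * (t^2 * a + (t⁻¹)^2 * b) := by
    intro t ht
    have h1 := (abs_le.mp (h (t • v + t⁻¹ • y))).2
    have h2 := (abs_le.mp (h (t • v - t⁻¹ • y))).1
    have hByv : B.mulVec y ⬝ᵥ v = b := by rw [hsym]
    have hvy : v ⬝ᵥ y = B.mulVec v ⬝ᵥ v := by rw [hy, dotProduct_comm]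
    have hyv : y ⬝ᵥ v = B.mulVec v ⬝ᵥ v := by rw [hy]
    have hBvy : B.mulVec v ⬝ᵥ y = b := by rw [hb, hy]
    have htt : t * t⁻¹ = 1 := mul_inv_cancel₀ ht.ne'
    simp only [mulVec_add, mulVec_sub, mulVec_smul, dotProduct_add, add_dotProduct,
      dotProduct_sub, sub_dotProduct, dotProduct_smul, smul_dotProduct, smul_eq_mul,
      hByv, hvy, hyv, hBvy] at h1 h2
    nlinarith [h1, h2, htt, sq_nonneg t, sq_nonneg t⁻¹]
  rcases eq_or_lt_of_le hb0 with hbe | hbpos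
  · nlinarith
  rcases eq_or_lt_of_le ha0 with hae | hapos
  · exfalso
    have hv0 : v = 0 := dotProduct_self_eq_zero.mp hae.symm
    have hy0 : y = 0 := by rw [hy, hv0, mulVec_zero]
    have : b = 0 := by rw [hb, hy0, zero_dotProduct]
    linarith
  · set sa := Real.sqrt a with hsa
    set sb := Real.sqrt b with hsb
    have hsa0 : 0 < sa := Real.sqrt_pos.mpr hapos
    have hsb0 : 0 < sb := Real.sqrt_pos.mpr hbpos
    have hsa2 : sa^2 = a := Real.sq_sqrt ha0
    have hsb2 : sb^2 = b := Real.sq_sqrt hb0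
    set t := Real.sqrt (sb / sa) with htdef
    have htpos : 0 < t := Real.sqrt_pos.mpr (div_pos hsb0 hsa0)
    have ht2 : t^2 = sb / sa := Real.sq_sqrt (div_pos hsb0 hsa0).le
    have hti2 : (t⁻¹)^2 = sa / sb := by
      rw [inv_pow, ht2, inv_div]
    have hk := key t htpos
    rw [ht2, hti2] at hk
    have h4 : 4 * b ≤ 4 * ρ * (sa * sb) := by
      have e1 : sb / sa * a = sa * sb := by
        field_simp; nlinarith [hsa2]
      have e2 : sa / sb * b = sa * sb := by
        field_simp; nlinarith [hsb2]
      rw [e1, e2] at hk; linarith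
    have h5 : sb ≤ ρ * sa := by nlinarith
    nlinarith

lemma euclNorm_nonneg {n : ℕ} (x : Fin n → ℝ) : 0 ≤ euclNorm x :=
  Real.sqrt_nonneg _

lemma euclNorm_triangle {n : ℕ} (x y z : Fin n → ℝ) :
    euclNorm (x - z) ≤ euclNorm (x - y) + euclNorm (y - z) := by
  rw [euclNorm_eq_norm, euclNorm_eq_norm, euclNorm_eq_norm]
  have h := norm_add_le ((WithLp.equiv 2 (Fin n → ℝ)).symm (x - y))
    ((WithLp.equiv 2 (Fin n → ℝ)).symm (y - z))
  have e : (WithLp.equiv 2 (Fin n → ℝ)).symm (x - z) =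
      (WithLp.equiv 2 (Fin n → ℝ)).symm (x - y) + (WithLp.equiv 2 (Fin n → ℝ)).symm (y - z) := by
    apply (WithLp.equiv 2 (Fin n → ℝ)).injective
    simp
  rw [e]
  exact h

lemma euclNorm_sub_comm {n : ℕ} (x y : Fin n → ℝ) :
    euclNorm (x - y) = euclNorm (y - x) := by
  rw [euclNorm_eq_norm, euclNorm_eq_norm]
  have e : (WithLp.equiv 2 (Fin n → ℝ)).symm (x - y) =
      -((WithLp.equiv 2 (Fin n → ℝ)).symm (y - x)) := by
    apply (WithLp.equiv 2 (Fin n → ℝ)).injective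
    simp
  rw [e, norm_neg]

/-- Rank-controlled (soft-thresholded) Richardson iteration (Theorem 4.3):
for a symmetric matrix `A` with spectral bounds `γ₁, γ₂`, optimal step size
`ω = 2/(γ₁+γ₂)`, rate `ρ = (γ₂−γ₁)/(γ₂+γ₁)`, solution `w*` of `A w* = f`, and a
non-expansive map `S`, the map `T(x) = S(x − ω(Ax − f))` has a unique fixed
point `w^δ`, the iterates contract with rate `ρ`, and
`(1+ρ)⁻¹‖S(w*) − w*‖ ≤ ‖w^δ − w*‖ ≤ (1−ρ)⁻¹‖S(w*) − w*‖`. -/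
theorem thresholded_richardson
    {n : ℕ} (A : Matrix (Fin n) (Fin n) ℝ) (hA : A.IsSymm)
    (γ₁ γ₂ : ℝ) (hγ₁ : 0 < γ₁) (hγ₁₂ : γ₁ ≤ γ₂)
    (hlow : ∀ v : Fin n → ℝ, γ₁ * (v ⬝ᵥ v) ≤ A.mulVec v ⬝ᵥ v)
    (hup : ∀ v : Fin n → ℝ, A.mulVec v ⬝ᵥ v ≤ γ₂ * (v ⬝ᵥ v))
    (f wstar : Fin n → ℝ) (hwstar : A.mulVec wstar = f)
    (S : (Fin n → ℝ) → (Fin n → ℝ))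
    (hS : ∀ x y : Fin n → ℝ, euclNorm (S x - S y) ≤ euclNorm (x - y)) :
    ∃ wd : Fin n → ℝ,
      (S (wd - (2 / (γ₁ + γ₂)) • (A.mulVec wd - f)) = wd) ∧
      (∀ x : Fin n → ℝ,
        S (x - (2 / (γ₁ + γ₂)) • (A.mulVec x - f)) = x → x = wd) ∧
      (∀ x₀ : Fin n → ℝ, ∀ k : ℕ,
        euclNorm ((fun x => S (x - (2 / (γ₁ + γ₂)) • (A.mulVec x - f)))^[k] x₀
            - wd) ≤
          ((γ₂ - γ₁) / (γ₂ + γ₁)) ^ k * euclNorm (x₀ - wd)) ∧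
      (1 + (γ₂ - γ₁) / (γ₂ + γ₁))⁻¹ * euclNorm (S wstar - wstar) ≤
        euclNorm (wd - wstar) ∧
      euclNorm (wd - wstar) ≤
        (1 - (γ₂ - γ₁) / (γ₂ + γ₁))⁻¹ * euclNorm (S wstar - wstar) := by
  have hs : 0 < γ₁ + γ₂ := by linarith
  set ω : ℝ := 2 / (γ₁ + γ₂) with hω
  set ρ : ℝ := (γ₂ - γ₁) / (γ₂ + γ₁) with hρdef
  have hρ0 : 0 ≤ ρ := div_nonneg (by linarith) (by linarith)
  have hρ1 : ρ < 1 := by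
    rw [hρdef, div_lt_one (by linarith)]; linarith
  -- the matrix B = I - ω A
  set B : Matrix (Fin n) (Fin n) ℝ := 1 - ω • A with hB
  have hBmul : ∀ v, B.mulVec v = v - ω • A.mulVec v := by
    intro v
    rw [hB, sub_mulVec, one_mulVec, smul_mulVec]
  have hAsym : ∀ x y : Fin n → ℝ, A.mulVec x ⬝ᵥ y = x ⬝ᵥ A.mulVec y := by
    intro x y
    rw [dotProduct_comm, dotProduct_mulVec, ← mulVec_transpose, hA.eq, dotProduct_comm]
  have hBsym : ∀ x y : Fin n → ℝ, B.mulVec x ⬝ᵥ y = x ⬝ᵥ B.mulVec y := by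
    intro x y
    rw [hBmul, hBmul, sub_dotProduct, dotProduct_sub, smul_dotProduct, dotProduct_smul,
      hAsym]
  have hBquad : ∀ v, |B.mulVec v ⬝ᵥ v| ≤ ρ * (v ⬝ᵥ v) := by
    intro v
    have h1 := hlow v
    have h2 := hup v
    have hvv := dot_self_nonneg v
    rw [hBmul, sub_dotProduct, smul_dotProduct, smul_eq_mul, abs_le]
    have hωs : ω * (γ₁ + γ₂) = 2 := div_mul_cancel₀ _ (ne_of_gt hs)
    have hρs : ρ * (γ₂ + γ₁) = γ₂ - γ₁ := by
      rw [hρdef]; exact div_mul_cancel₀ _ (by linarith)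
    set V := v ⬝ᵥ v
    set q := A.mulVec v ⬝ᵥ v
    have e1 : (V - ω * q) * (γ₁ + γ₂) = V * (γ₁ + γ₂) - 2 * q := by
      linear_combination (-q) * hωs
    have e2 : ρ * V * (γ₁ + γ₂) = (γ₂ - γ₁) * V := by
      linear_combination V * hρs
    constructor
    · have h3 : (-(ρ * V)) * (γ₁ + γ₂) ≤ (V - ω * q) * (γ₁ + γ₂) := by
        rw [e1]
        nlinarith [h2]
      exact le_of_mul_le_mul_right h3 hs
    · have h3 : (V - ω * q) * (γ₁ + γ₂) ≤ (ρ * V) * (γ₁ + γ₂) := by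
        rw [e1, e2]
        nlinarith [h1]
      exact le_of_mul_le_mul_right h3 hs
  have hop := opbound B hBsym ρ hρ0 hBquad
  -- the map T and its contraction property in euclNorm
  set T : (Fin n → ℝ) → (Fin n → ℝ) := fun x => S (x - ω • (A.mulVec x - f)) with hT
  have hgdiff : ∀ x y : Fin n → ℝ,
      (x - ω • (A.mulVec x - f)) - (y - ω • (A.mulVec y - f)) = B.mulVec (x - y) := by
    intro x y
    rw [hBmul, mulVec_sub]
    ext i
    simp [smul_eq_mul]
    ring
  have hcontr : ∀ x y : Fin n → ℝ, euclNorm (T x - T y) ≤ ρ * euclNorm (x - y) := by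
    intro x y
    refine le_trans (hS _ _) ?_
    rw [hgdiff, euclNorm_eq_sqrt_dot, euclNorm_eq_sqrt_dot]
    have := hop (x - y)
    calc Real.sqrt (B.mulVec (x - y) ⬝ᵥ B.mulVec (x - y))
        ≤ Real.sqrt (ρ^2 * ((x - y) ⬝ᵥ (x - y))) := Real.sqrt_le_sqrt this
      _ = ρ * Real.sqrt ((x - y) ⬝ᵥ (x - y)) := by
          rw [Real.sqrt_mul (sq_nonneg ρ), Real.sqrt_sq hρ0]
  -- transfer to EuclideanSpace to use Banach fixed point theorem
  set e := WithLp.equiv 2 (Fin n → ℝ) with he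
  set T' : EuclideanSpace ℝ (Fin n) → EuclideanSpace ℝ (Fin n) :=
    fun x => e.symm (T (e x)) with hT'
  have hdist : ∀ x y : EuclideanSpace ℝ (Fin n), dist x y = euclNorm (e x - e y) := by
    intro x y
    rw [dist_eq_norm, euclNorm_eq_norm]; rfl
  have hLip : LipschitzWith ⟨ρ, hρ0⟩ T' := by
    apply LipschitzWith.of_dist_le_mul
    intro x y
    rw [hdist, hdist]
    have : e (T' x) = T (e x) := by simp [hT']
    rw [this]
    have : e (T' y) = T (e y) := by simp [hT']
    rw [this]
    exact hcontr _ _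
  have hCW : ContractingWith ⟨ρ, hρ0⟩ T' := ⟨by exact_mod_cast hρ1, hLip⟩
  set wd' := ContractingWith.fixedPoint T' hCW with hwd'
  set wd : Fin n → ℝ := e wd' with hwd
  have hfix : T wd = wd := by
    have h := hCW.fixedPoint_isFixedPt
    have : T' wd' = wd' := h
    have h2 := congrArg e this
    rw [hT'] at h2
    simpa [hwd] using h2
  refine ⟨wd, hfix, ?_, ?_, ?_⟩
  · intro x hx
    have : T' (e.symm x) = e.symm x := by
      simp [hT']
      exact hx
    have := hCW.fixedPoint_unique this
    have h2 := congrArg e this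
    simpa [hwd] using h2
  · intro x₀ k
    induction k with
    | zero => simp
    | succ k ih =>
      rw [Function.iterate_succ_apply']
      calc euclNorm (T ((fun x => S (x - ω • (A.mulVec x - f)))^[k] x₀) - wd)
          = euclNorm (T ((fun x => S (x - ω • (A.mulVec x - f)))^[k] x₀) - T wd) := by
            rw [hfix]
        _ ≤ ρ * euclNorm ((fun x => S (x - ω • (A.mulVec x - f)))^[k] x₀ - wd) :=
            hcontr _ _
        _ ≤ ρ * (ρ ^ k * euclNorm (x₀ - wd)) := by
            exact mul_le_mul_of_nonneg_left ih hρ0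
        _ = ρ ^ (k + 1) * euclNorm (x₀ - wd) := by ring
  · -- final bounds
    have hgw : wstar - ω • (A.mulVec wstar - f) = wstar := by
      rw [hwstar]; simp
    have hTw : T wstar = S wstar := by simp only [hT]; rw [hgw]
    have hkey : euclNorm (wd - S wstar) ≤ ρ * euclNorm (wd - wstar) := by
      calc euclNorm (wd - S wstar) = euclNorm (T wd - T wstar) := by rw [hfix, hTw]
        _ ≤ ρ * euclNorm (wd - wstar) := hcontr _ _
    set d := euclNorm (wd - wstar) with hd
    set c := euclNorm (S wstar - wstar) with hc
    have hd0 : 0 ≤ d := euclNorm_nonneg _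
    have hc0 : 0 ≤ c := euclNorm_nonneg _
    have hupper : d ≤ euclNorm (wd - S wstar) + c :=
      euclNorm_triangle wd (S wstar) wstar
    have hlower : c ≤ euclNorm (wd - S wstar) + d := by
      calc c ≤ euclNorm (S wstar - wd) + euclNorm (wd - wstar) :=
            euclNorm_triangle (S wstar) wd wstar
        _ = euclNorm (wd - S wstar) + d := by rw [euclNorm_sub_comm]
    constructor
    · rw [inv_mul_eq_div, div_le_iff₀ (by linarith)]
      nlinarith
    · rw [inv_mul_eq_div, le_div_iff₀ (by linarith)]
      nlinarith
end

section
/- Let Z > 0, let J ≥ 1 be a natural number, h = Z/J, and let v : ℝ → ℝ be continuous on [0,Z] and affine on each subinterval [k·h, (k+1)·h], k = 0, …, J−1; that is, there exist reals a_k, b_k with v(x) = a_k + b_k·x for all x ∈ [k·h, (k+1)·h]. Then Σ_{k=0}^{J−1} b_k² · h ≤ (12/h²) · ∫₀^Z v(x)² dx; equivalently, ∫₀^Z v'(x)² dx ≤ 12·(J/Z)² · ∫₀^Z v(x)² dx where v' denotes the piecewise slope. -/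
/-!
On an element `[c, d]` of length `ℓ`, expanding around the midpoint gives
`∫ (A + B x)² = ℓ m² + B² ℓ³ / 12`, where `m` is the value at the midpoint; hence
`B² ℓ³ ≤ 12 ∫ (A + B x)²`. Summing over the `J` elements of length `h` yields
`h³ ∑ b_k² ≤ 12 ∫₀^Z v²`.
-/

open MeasureTheory Set intervalIntegral
open scoped Interval

theorem integral_affine_sq (A B c d : ℝ) :
    ∫ x in c..d, (A + B * x) ^ 2 =
      (d - c) * (A + B * ((c + d) / 2)) ^ 2 + B ^ 2 * (d - c) ^ 3 / 12 := by
  have hderiv : ∀ x ∈ [[c, d]],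
      HasDerivAt (fun x ↦ A ^ 2 * x + A * B * x ^ 2 + B ^ 2 * x ^ 3 / 3) ((A + B * x) ^ 2) x :=
    fun x _ ↦
      ((((hasDerivAt_id x).const_mul (A ^ 2)).add ((hasDerivAt_pow 2 x).const_mul (A * B))).add
        (((hasDerivAt_pow 3 x).const_mul (B ^ 2)).div_const 3)).congr_deriv (by push_cast; ring)
  rw [integral_eq_sub_of_hasDerivAt hderiv (Continuous.intervalIntegrable (by fun_prop) _ _)]
  ring

theorem slope_sq_mul_pow_three_le_integral_affine_sq {A B c d : ℝ} (hcd : c ≤ d) :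
    B ^ 2 * (d - c) ^ 3 ≤ 12 * ∫ x in c..d, (A + B * x) ^ 2 := by
  rw [integral_affine_sq]
  have := mul_nonneg (sub_nonneg.mpr hcd) (sq_nonneg (A + B * ((c + d) / 2)))
  linarith

theorem sum_slope_sq_mul_pow_three_le_of_piecewise_affine {n : ℕ} {p : ℕ → ℝ} (hp : Monotone p)
    {v : ℝ → ℝ} {a b : Fin n → ℝ}
    (haff : ∀ k : Fin n, EqOn v (fun x ↦ a k + b k * x) (Icc (p k) (p (k + 1)))) :
    ∑ k : Fin n, b k ^ 2 * (p (k + 1) - p k) ^ 3 ≤ 12 * ∫ x in p 0..p n, v x ^ 2 := by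
  have hsq : ∀ k : Fin n,
      EqOn (fun x ↦ v x ^ 2) (fun x ↦ (a k + b k * x) ^ 2) [[p k, p (k + 1)]] :=
    fun k x hx ↦ by
      rw [uIcc_of_le (hp k.val.le_succ)] at hx
      simp only [haff k hx]
  have hint : ∀ k < n, IntervalIntegrable (fun x ↦ v x ^ 2) volume (p k) (p (k + 1)) := fun k hk ↦
    (intervalIntegrable_congr ((hsq ⟨k, hk⟩).mono uIoc_subset_uIcc)).mpr
      (Continuous.intervalIntegrable (by fun_prop) _ _)
  rw [← sum_integral_adjacent_intervals hint, Finset.mul_sum, ← Fin.sum_univ_eq_sum_range]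
  refine Finset.sum_le_sum fun k _ ↦ ?_
  rw [integral_congr (hsq k)]
  exact slope_sq_mul_pow_three_le_integral_affine_sq (hp k.val.le_succ)

theorem fem_inverse_inequality_general
    (Z : ℝ) (hZ : 0 < Z) (J : ℕ) (hJ : 1 ≤ J)
    (v : ℝ → ℝ) (a b : Fin J → ℝ)
    (haff : ∀ k : Fin J, ∀ x ∈ Set.Icc ((k : ℝ) * (Z / J)) (((k : ℝ) + 1) * (Z / J)),
      v x = a k + b k * x) :
    ∑ k, b k ^ 2 * (Z / J) ≤
      (12 / (Z / J) ^ 2) * ∫ x in (0:ℝ)..Z, v x ^ 2 := by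
  set h := Z / J with h_def
  have hh : 0 < h := div_pos hZ (by exact_mod_cast hJ)
  have hmesh : Monotone fun k : ℕ ↦ k * h := fun i j hij ↦
    mul_le_mul_of_nonneg_right (by exact_mod_cast hij) hh.le
  have hbound := sum_slope_sq_mul_pow_three_le_of_piecewise_affine hmesh
    fun k x hx ↦ haff k x (by exact_mod_cast hx)
  have hZJ : (J : ℝ) * h = Z := by rw [h_def]; field_simp
  simp only [Nat.cast_add, Nat.cast_one, Nat.cast_zero, zero_mul, hZJ, add_mul, one_mul,
    add_sub_cancel_left] at hbound
  rw [div_mul_eq_mul_div, le_div_iff₀ (by positivity), Finset.sum_mul]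
  calc ∑ k, b k ^ 2 * h * h ^ 2 = ∑ k, b k ^ 2 * h ^ 3 := by simp only [mul_assoc, ← pow_succ']
    _ ≤ _ := hbound

/-- Inverse inequality for continuous piecewise-linear finite element functions
on a uniform partition of `(0,Z)` with `J` elements and mesh size `h = Z/J`:
the L² norm of the piecewise slope is bounded by `(12/h²)` times the L² norm of
the function. -/
theorem fem_inverse_inequality
    (Z : ℝ) (hZ : 0 < Z) (J : ℕ) (hJ : 1 ≤ J)
    (v : ℝ → ℝ) (a b : Fin J → ℝ)
    (hv : ContinuousOn v (Set.Icc 0 Z))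
    (haff : ∀ k : Fin J, ∀ x ∈ Set.Icc ((k : ℝ) * (Z / J)) (((k : ℝ) + 1) * (Z / J)),
      v x = a k + b k * x) :
    ∑ k, b k ^ 2 * (Z / J) ≤
      (12 / (Z / J) ^ 2) * ∫ x in (0:ℝ)..Z, v x ^ 2 :=
  fem_inverse_inequality_general Z hZ J hJ v a b haff
end
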